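/- arXiv:2108.13338 — 4 statements merged into one kernel-verified Lean document; each statement's English description precedes it below -/
import Mathlib

section
/- If μ is a node labeling with values in L(T) ∪ {⊤} (T an ordered tree of height d/2) that is feasible in a cycle C of the game graph, then μ(v)|_{π(C)} = μ(w)|_{π(C)} for all nodes v, w on C, where π(C) is the maximum priority on C. Moreover, if μ(v) ≠ ⊤ for some v on C, then π(C) is even. -/
/-!
Every arc `v → w` of the cycle has `π v ≤ P`, and truncating further only coarsens the
lexicographic order, so along the cycle the `P`-truncations of the labels never increase.
Going once around the cycle forces them all to be equal. An arc leaving a node of odd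
priority `P` would then have to strictly decrease the `P`-truncation, which is impossible,
unless both its labels are `⊤`; in that case every `P`-truncation, hence every label, is `⊤`.
-/

/-- The `p`-truncation of a label: a leaf of an ordered tree of height `h` is an `h`-tuple
`(ξ_{2h-1}, ξ_{2h-3}, …, ξ_1)` (a list of length `h`, lexicographically ordered); the
`p`-truncation deletes the components with index `< p` (for odd `p`, index `< p`; for even
`p`, index `≤ p`), i.e. keeps the first `h - p/2` entries; and `⊤|_p = ⊤`. -/
def trunc {M : Type*} (h p : ℕ) (x : WithTop (List M)) : WithTop (List M) :=
  WithTop.map (List.take (h - p / 2)) x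

/-- The progress-measure condition for an arc with tail-priority `p`, tail label `x` and
head label `y` (labels in `L(T) ∪ {⊤}` for a tree `T` of height `h`): if `p` is even then
`x|_p ≥ y|_p`; if `p` is odd then `x|_p > y|_p` or both labels are `⊤`.  An arc whose
labels satisfy this condition is *non-violated*. -/
def NV {M : Type*} [LinearOrder M] (h p : ℕ) (x y : WithTop (List M)) : Prop :=
  if Even p then trunc h p y ≤ trunc h p x
  else trunc h p y < trunc h p x ∨ (x = ⊤ ∧ y = ⊤)

theorem List.take_le_take_of_lt {α : Type*} [LinearOrder α] {l₁ l₂ : List α} (h : l₁ < l₂)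
    (m : ℕ) : l₁.take m ≤ l₂.take m := by
  induction h generalizing m with
  | nil => cases m with
    | zero => exact le_rfl
    | succ m => exact le_of_lt List.Lex.nil
  | cons _ ih => cases m with
    | zero => exact le_rfl
    | succ m => exact List.cons_le_cons _ (ih m)
  | rel hab => cases m with
    | zero => exact le_rfl
    | succ m => exact le_of_lt (List.Lex.rel hab)

theorem List.monotone_take {α : Type*} [LinearOrder α] (m : ℕ) :
    Monotone (List.take (α := α) m) := fun _ _ h =>
  h.lt_or_eq.elim (List.take_le_take_of_lt · m) (fun h => h ▸ le_rfl)

theorem Fin.le_of_forall_apply_add_one_le {α : Type*} [Preorder α] {n : ℕ}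
    {f : Fin (n + 1) → α} (h : ∀ i, f (i + 1) ≤ f i) (i j : Fin (n + 1)) : f j ≤ f i := by
  have key : ∀ k : Fin (n + 1), f (i + k) ≤ f i := by
    intro k
    induction k using Fin.induction with
    | zero => simp
    | succ k ih =>
      rw [← Fin.coeSucc_eq_succ, ← add_assoc]
      exact (h _).trans ih
  simpa using key (j - i)

theorem Fin.eq_of_forall_apply_add_one_le {α : Type*} [PartialOrder α] {n : ℕ}
    {f : Fin (n + 1) → α} (h : ∀ i, f (i + 1) ≤ f i) (i j : Fin (n + 1)) : f i = f j :=
  le_antisymm (Fin.le_of_forall_apply_add_one_le h j i) (Fin.le_of_forall_apply_add_one_le h i j)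

section Truncation

variable {M : Type*} {h p P : ℕ} {x y : WithTop (List M)}

@[simp]
theorem trunc_top : trunc h p (⊤ : WithTop (List M)) = ⊤ := rfl

@[simp]
theorem trunc_eq_top_iff : trunc h p x = ⊤ ↔ x = ⊤ := WithTop.map_eq_top_iff

theorem trunc_trunc_of_le (hpP : p ≤ P) : trunc h P (trunc h p x) = trunc h P x := by
  have hm : h - P / 2 ≤ h - p / 2 := Nat.sub_le_sub_left (Nat.div_le_div_right hpP) h
  cases x <;> simp [trunc, List.take_take, min_eq_left hm]

theorem trunc_le_trunc_of_le [LinearOrder M] (hpP : p ≤ P) (hxy : trunc h p y ≤ trunc h p x) :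
    trunc h P y ≤ trunc h P x := by
  rw [← trunc_trunc_of_le hpP, ← trunc_trunc_of_le (x := x) hpP]
  exact (List.monotone_take _).withTop_map hxy

namespace NV

variable [LinearOrder M]

theorem trunc_le (hnv : NV h p x y) (hpP : p ≤ P) : trunc h P y ≤ trunc h P x := by
  unfold NV at hnv
  split_ifs at hnv
  · exact trunc_le_trunc_of_le hpP hnv
  · rcases hnv with hlt | ⟨rfl, rfl⟩
    · exact trunc_le_trunc_of_le hpP hlt.le
    · exact le_rfl

theorem eq_top_of_not_even (hnv : NV h p x y) (hp : ¬Even p)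
    (heq : trunc h p x = trunc h p y) : x = ⊤ := by
  rw [NV, if_neg hp] at hnv
  rcases hnv with hlt | ⟨hx, _⟩
  · exact absurd heq hlt.ne'
  · exact hx

end NV

end Truncation

theorem stmt_6_general {V M : Type*} [LinearOrder M]
    (h : ℕ)
    (π : V → ℕ)
    (μ : V → WithTop (List M))
    (n : ℕ) (c : Fin (n + 1) → V)
    (hfeas : ∀ i, NV h (π (c i)) (μ (c i)) (μ (c (i + 1))))
    (P : ℕ) (hub : ∀ i, π (c i) ≤ P) (hmem : ∃ i, π (c i) = P) :
    (∀ i j, trunc h P (μ (c i)) = trunc h P (μ (c j))) ∧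
      ((∃ i, μ (c i) ≠ ⊤) → Even P) := by
  have hconst : ∀ i j, trunc h P (μ (c i)) = trunc h P (μ (c j)) :=
    Fin.eq_of_forall_apply_add_one_le fun i => (hfeas i).trunc_le (hub i)
  refine ⟨hconst, ?_⟩
  rintro ⟨i, hi⟩
  by_contra hodd
  obtain ⟨j, rfl⟩ := hmem
  have htop : μ (c j) = ⊤ := (hfeas j).eq_top_of_not_even hodd (hconst j (j + 1))
  exact hi (trunc_eq_top_iff.mp (by rw [hconst i j, htop, trunc_top]))

/-- **Cycle Lemma.** Let `μ` be a node labeling with values in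
`L(T) ∪ {⊤}` for an ordered tree `T` of height `h = d/2` that is feasible in a cycle
`c 0 → c 1 → ⋯ → c n → c 0` (every arc of the cycle is non-violated).  If `P` is the
maximum priority occurring on the cycle, then `μ(v)|_P = μ(w)|_P` for all nodes `v, w`
of the cycle; moreover, if `μ(v) ≠ ⊤` for some node of the cycle, then `P` is even. -/
theorem stmt_6 {V M : Type*} [LinearOrder M]
    (d h : ℕ) (hd : d = 2 * h)
    (π : V → ℕ) (hπ : ∀ v, 1 ≤ π v ∧ π v ≤ d)
    (μ : V → WithTop (List M))
    (hlen : ∀ (v : V) (ξ : List M), μ v = (ξ : WithTop (List M)) → ξ.length = h)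
    (n : ℕ) (c : Fin (n + 1) → V)
    (hfeas : ∀ i, NV h (π (c i)) (μ (c i)) (μ (c (i + 1))))
    (P : ℕ) (hub : ∀ i, π (c i) ≤ P) (hmem : ∃ i, π (c i) = P) :
    (∀ i j, trunc h P (μ (c i)) = trunc h P (μ (c j))) ∧
      ((∃ i, μ (c i) ≠ ⊤) → Even P) :=
  stmt_6_general h π μ n c hfeas P hub hmem
end

section
/- Let C be an even cycle with set of maximum-priority nodes Π(C) = {v₁, …, v_ℓ} and j = π(C)/2, and decompose C into arc-disjoint paths P₁, …, P_ℓ where P_i ends at v_i. For any chain C^k_j of subtrees of the universal tree T (ordered by embeddability), the k-th width of C equals the maximum over i ∈ [ℓ] of the k-th width of P_i: α^k(C) = max_i α^k(P_i). -/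
/-- Feasibility of a finite node labeling `ν` (values: leaves of an ordered tree of
height `j`, i.e. lexicographically ordered `j`-tuples) on an arc `a = (v, w)`:
if `π v` is even then `ν(v)|_{π v} ≥ ν(w)|_{π v}`, and if `π v` is odd then the
inequality is strict (the `p`-truncation keeps the first `j - p/2` components). -/
def feasArc {V M : Type*} [LinearOrder M] (π : V → ℕ) (j : ℕ)
    (ν : V → List M) (a : V × V) : Prop :=
  if Even (π a.1) then
    List.take (j - π a.1 / 2) (ν a.2) ≤ List.take (j - π a.1 / 2) (ν a.1)
  else
    List.take (j - π a.1 / 2) (ν a.2) < List.take (j - π a.1 / 2) (ν a.1)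

/-- `A` (a list of arcs) admits a finite feasible node labeling with labels in the leaf
set `S` of a tree of height `j`. -/
def FeasIn {V M : Type*} [LinearOrder M] (π : V → ℕ) (j : ℕ)
    (S : Set (List M)) (A : List (V × V)) : Prop :=
  ∃ ν : V → List M, (∀ a ∈ A, ν a.1 ∈ S ∧ ν a.2 ∈ S) ∧ ∀ a ∈ A, feasArc π j ν a

/-- The `k`-th width of a set of arcs `A` with respect to the chain of trees with leaf
sets `S 0, S 1, …` (ordered by embeddability): the least `i` such that `A` admits a
finite feasible node labeling into `S i`, and `∞` if none exists. -/
noncomputable def width {V M : Type*} [LinearOrder M] (π : V → ℕ) (j : ℕ)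
    (S : ℕ → Set (List M)) (A : List (V × V)) : ℕ∞ :=
  sInf {x : ℕ∞ | ∃ i : ℕ, x = (i : ℕ∞) ∧ FeasIn π j (S i) A}

/-- The arcs of the cycle through the (distinct) nodes of the list `c`. -/
def cycleArcs {V : Type*} (c : List V) : List (V × V) := c.zip (c.rotate 1)

/-- The arcs of the path through the nodes of the list `p`. -/
def pathArcs {V : Type*} (p : List V) : List (V × V) := p.zip p.tail

/-!
Every arc of a path is an arc of the cycle, so a labeling of the cycle restricts to each path,
giving `≥`. Conversely, in a cycle every node has exactly one incoming and one outgoing arc.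
Raise the path labelings to a common tree of the chain and give each node the label chosen by
the path containing its incoming arc. An arc `(x, y)` of `P i` then carries the labels of
`P i`'s own labeling at both ends, unless the path entering `x` ends there; but then `x` is
some `v i'`, of priority `2j`, and an arc leaving a node of priority `2j` imposes no
constraint.
-/

section Width

variable {V M : Type*} [LinearOrder M] {π : V → ℕ} {j : ℕ}

theorem feasArc_congr {ν ν' : V → List M} {a : V × V} (h₁ : ν a.1 = ν' a.1)
    (h₂ : ν a.2 = ν' a.2) : feasArc π j ν a ↔ feasArc π j ν' a := by
  simp only [feasArc, h₁, h₂]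

/-- At priority `2j` the truncation keeps no component. -/
theorem feasArc_of_eq_two_mul {ν : V → List M} {a : V × V} (ha : π a.1 = 2 * j) :
    feasArc π j ν a := by
  simp [feasArc, ha]

theorem FeasIn.mono {T : Set (List M)} {A B : List (V × V)} (hAB : ∀ a ∈ A, a ∈ B)
    (hB : FeasIn π j T B) : FeasIn π j T A := by
  obtain ⟨ν, hmem, hfeas⟩ := hB
  exact ⟨ν, fun a ha => hmem a (hAB a ha), fun a ha => hfeas a (hAB a ha)⟩

theorem FeasIn.glue {ι : Type*} {T : Set (List M)} {A : ι → List (V × V)} {B : List (V × V)}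
    (hB : ∀ a ∈ B, ∃ i, a ∈ A i)
    (hin_unique : ∀ {i i' w w' u}, (w, u) ∈ A i → (w', u) ∈ A i' → i = i')
    (hin_exists : ∀ {i x y}, (x, y) ∈ A i → ∃ i' w, (w, x) ∈ A i')
    (hcont : ∀ {i i' w x y}, (w, x) ∈ A i' → (x, y) ∈ A i → i' = i ∨ π x = 2 * j)
    (hA : ∀ i, FeasIn π j T (A i)) : FeasIn π j T B := by
  classical
  choose ν hmem hfeas using hA
  let glued : V → List M := fun u =>
    if h : ∃ p : ι × V, (p.2, u) ∈ A p.1 then ν h.choose.1 u else []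
  have glued_eq : ∀ {i w u}, (w, u) ∈ A i → glued u = ν i u := by
    intro i w u hwu
    have h : ∃ p : ι × V, (p.2, u) ∈ A p.1 := ⟨(i, w), hwu⟩
    simp only [glued, dif_pos h, hin_unique h.choose_spec hwu]
  refine ⟨glued, fun a ha => ?_, fun a ha => ?_⟩ <;> obtain ⟨i, hai⟩ := hB a ha <;>
    obtain ⟨i', w, hwx⟩ := hin_exists hai
  · exact ⟨glued_eq hwx ▸ (hmem i' _ hwx).2, glued_eq hai ▸ (hmem i a hai).2⟩
  · rcases hcont hwx hai with rfl | htop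
    · exact (feasArc_congr (glued_eq hwx) (glued_eq hai)).2 (hfeas i' a hai)
    · exact feasArc_of_eq_two_mul htop

theorem width_le_of_feasIn {S : ℕ → Set (List M)} {A : List (V × V)} {n : ℕ}
    (h : FeasIn π j (S n) A) : width π j S A ≤ n :=
  sInf_le ⟨n, rfl, h⟩

theorem feasIn_of_width_le {S : ℕ → Set (List M)} {A : List (V × V)}
    (hchain : ∀ n n', n ≤ n' → FeasIn π j (S n) A → FeasIn π j (S n') A) {m : ℕ}
    (hm : width π j S A ≤ m) : FeasIn π j (S m) A := by
  have hne : {x : ℕ∞ | ∃ n : ℕ, x = n ∧ FeasIn π j (S n) A}.Nonempty := by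
    by_contra hempty
    rw [Set.not_nonempty_iff_eq_empty] at hempty
    simp [width, hempty] at hm
  obtain ⟨n, hn, hfeas⟩ := csInf_mem hne
  exact hchain n m (by exact_mod_cast (hn ▸ hm : (n : ℕ∞) ≤ m)) hfeas

theorem width_mono {S : ℕ → Set (List M)} {A B : List (V × V)} (hAB : ∀ a ∈ A, a ∈ B) :
    width π j S A ≤ width π j S B :=
  sInf_le_sInf fun _ ⟨n, hn, hfeas⟩ => ⟨n, hn, hfeas.mono hAB⟩

theorem width_le_sup_of_glue {ι : Type*} [Fintype ι] {S : ℕ → Set (List M)}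
    {A : ι → List (V × V)} {B : List (V × V)}
    (hchain : ∀ i n n', n ≤ n' → FeasIn π j (S n) (A i) → FeasIn π j (S n') (A i))
    (hB : ∀ a ∈ B, ∃ i, a ∈ A i)
    (hin_unique : ∀ {i i' w w' u}, (w, u) ∈ A i → (w', u) ∈ A i' → i = i')
    (hin_exists : ∀ {i x y}, (x, y) ∈ A i → ∃ i' w, (w, x) ∈ A i')
    (hcont : ∀ {i i' w x y}, (w, x) ∈ A i' → (x, y) ∈ A i → i' = i ∨ π x = 2 * j) :
    width π j S B ≤ Finset.univ.sup fun i => width π j S (A i) := by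
  cases hsup : Finset.univ.sup (fun i => width π j S (A i)) using ENat.recTopCoe with
  | top => exact le_top
  | coe m =>
    refine width_le_of_feasIn (FeasIn.glue hB hin_unique hin_exists hcont fun i => ?_)
    exact feasIn_of_width_le (hchain i)
      (hsup ▸ Finset.le_sup (f := fun i => width π j S (A i)) (Finset.mem_univ i))

end Width

section Arcs

variable {V : Type*}

theorem mem_pathArcs_succ_or_getLast?_eq :
    ∀ {p : List V} {w x : V}, (w, x) ∈ pathArcs p →
      (∃ z, (x, z) ∈ pathArcs p) ∨ p.getLast? = some x
  | [], _, _, h | [_], _, _, h => by simp [pathArcs] at h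
  | u :: u' :: t, w, x, h => by
    change (w, x) ∈ (u, u') :: pathArcs (u' :: t) at h
    rcases List.mem_cons.1 h with h | h
    · obtain rfl : x = u' := (Prod.mk.inj h).2
      cases t with
      | nil => exact Or.inr rfl
      | cons z _ => exact Or.inl ⟨z, List.mem_cons_of_mem _ List.mem_cons_self⟩
    · rcases mem_pathArcs_succ_or_getLast?_eq h with ⟨z, hz⟩ | hlast
      · exact Or.inl ⟨z, List.mem_cons_of_mem _ hz⟩
      · exact Or.inr (by rwa [List.getLast?_cons_cons])

theorem cycleArcs_map_fst (c : List V) : (cycleArcs c).map Prod.fst = c :=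
  List.map_fst_zip (by simp)

theorem cycleArcs_map_snd (c : List V) : (cycleArcs c).map Prod.snd = c.rotate 1 :=
  List.map_snd_zip (by simp)

theorem exists_mem_cycleArcs_snd_eq {c : List V} {x y : V} (h : (x, y) ∈ cycleArcs c) :
    ∃ w, (w, x) ∈ cycleArcs c := by
  have hx : x ∈ (cycleArcs c).map Prod.snd := by
    rw [cycleArcs_map_snd, List.mem_rotate]
    exact (List.of_mem_zip h).1
  obtain ⟨⟨w, _⟩, hw, rfl⟩ := List.mem_map.1 hx
  exact ⟨w, hw⟩

end Arcs

theorem List.mem_flatten_ofFn {α : Type*} {n : ℕ} {A : Fin n → List α} {a : α} :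
    a ∈ (List.ofFn A).flatten ↔ ∃ i, a ∈ A i := by
  simp [List.mem_flatten, List.mem_ofFn]

theorem List.eq_of_mem_ofFn_of_nodup_map {α β : Type*} {n : ℕ} {A : Fin n → List α} (f : α → β)
    (hf : ((List.ofFn A).flatten.map f).Nodup) {i i' : Fin n} {a b : α} (ha : a ∈ A i)
    (hb : b ∈ A i') (hab : f a = f b) : i = i' := by
  obtain rfl : a = b := List.inj_on_of_nodup_map hf (List.mem_flatten_ofFn.2 ⟨i, ha⟩)
    (List.mem_flatten_ofFn.2 ⟨i', hb⟩) hab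
  by_contra hne
  have hdisj := List.pairwise_ofFn.1 (List.nodup_flatten.1 hf.of_map).2
  rcases lt_or_gt_of_ne hne with hlt | hlt
  · exact hdisj hlt ha hb
  · exact hdisj hlt hb ha

theorem stmt_8_general {V M : Type*} [LinearOrder M]
    (π : V → ℕ) (j : ℕ) (S : ℕ → Set (List M))
    (hchain : ∀ (A : List (V × V)) (i i' : ℕ), i ≤ i' →
      FeasIn π j (S i) A → FeasIn π j (S i') A)
    (c : List V) (hnodup : c.Nodup)
    (ℓ : ℕ) (v : Fin ℓ → V)
    (hv : ∀ i, v i ∈ c ∧ π (v i) = 2 * j)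
    (P : Fin ℓ → List V)
    (hends : ∀ i, (P i).getLast? = some (v i))
    (hdecomp : (cycleArcs c).Perm (List.ofFn fun i => pathArcs (P i)).flatten) :
    width π j S (cycleArcs c) = Finset.univ.sup fun i => width π j S (pathArcs (P i)) := by
  have mem_cycle {i a} (ha : a ∈ pathArcs (P i)) : a ∈ cycleArcs c :=
    hdecomp.mem_iff.2 (List.mem_flatten_ofFn.2 ⟨i, ha⟩)
  have mem_paths {a} (ha : a ∈ cycleArcs c) : ∃ i, a ∈ pathArcs (P i) :=
    List.mem_flatten_ofFn.1 (hdecomp.mem_iff.1 ha)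
  have hfst := (hdecomp.map Prod.fst).nodup_iff.1 (by rwa [cycleArcs_map_fst])
  have hsnd := (hdecomp.map Prod.snd).nodup_iff.1
    (by rw [cycleArcs_map_snd]; exact List.nodup_rotate.2 hnodup)
  have in_exists {i x y} (hxy : (x, y) ∈ pathArcs (P i)) : ∃ i' w, (w, x) ∈ pathArcs (P i') := by
    obtain ⟨w, hwx⟩ := exists_mem_cycleArcs_snd_eq (mem_cycle hxy)
    obtain ⟨i', hi'⟩ := mem_paths hwx
    exact ⟨i', w, hi'⟩
  have cont {i i' w x y} (hwx : (w, x) ∈ pathArcs (P i')) (hxy : (x, y) ∈ pathArcs (P i)) :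
      i' = i ∨ π x = 2 * j := by
    rcases mem_pathArcs_succ_or_getLast?_eq hwx with ⟨z, hxz⟩ | hlast
    · exact Or.inl (List.eq_of_mem_ofFn_of_nodup_map _ hfst hxz hxy rfl)
    · rw [hends] at hlast
      exact Or.inr (Option.some_injective _ hlast ▸ (hv i').2)
  refine le_antisymm ?_ (Finset.sup_le fun i _ => width_mono fun a ha => mem_cycle ha)
  exact width_le_sup_of_glue (fun _ => hchain _) (fun _ => mem_paths)
    (fun hw hw' => List.eq_of_mem_ofFn_of_nodup_map _ hsnd hw hw' rfl) in_exists cont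

/-- Let `C` be an even cycle with maximum priority `2j`, whose
maximum-priority nodes are `Π(C) = {v 0, …, v (ℓ-1)}`, decomposed into arc-disjoint paths
`P 0, …, P (ℓ-1)` where `P i` ends at `v i` and the arcs of the paths partition the arcs
of `C`.  For any chain `S` of subtrees of height `j` of the universal tree (so feasibility
into `S i` implies feasibility into `S i'` for `i ≤ i'`), the width of `C` equals the
maximum of the widths of the paths: `α^k(C) = max_i α^k(P i)`. -/
theorem stmt_8 {V M : Type*} [LinearOrder M]
    (π : V → ℕ) (j : ℕ) (S : ℕ → Set (List M))
    (hchain : ∀ (A : List (V × V)) (i i' : ℕ), i ≤ i' →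
      FeasIn π j (S i) A → FeasIn π j (S i') A)
    (c : List V) (hc : c ≠ []) (hnodup : c.Nodup)
    (hmax : ∀ u ∈ c, π u ≤ 2 * j)
    (ℓ : ℕ) (hℓ : 0 < ℓ) (v : Fin ℓ → V)
    (hv : ∀ i, v i ∈ c ∧ π (v i) = 2 * j)
    (hPi : ∀ u ∈ c, π u = 2 * j → ∃ i, v i = u)
    (P : Fin ℓ → List V)
    (hlen : ∀ i, 2 ≤ (P i).length)
    (hends : ∀ i, (P i).getLast? = some (v i))
    (hdecomp : (cycleArcs c).Perm (List.ofFn fun i => pathArcs (P i)).flatten) :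
    width π j S (cycleArcs c) = Finset.univ.sup fun i => width π j S (pathArcs (P i)) :=
  stmt_8_general π j S hchain c hnodup ℓ v hv P hends hdecomp
end

section
/- Every two subtrees of the succinct (n,h)-universal tree rooted at the same depth h−j are comparable under embeddability; that is, for each 0 ≤ j ≤ h, the set T_j of distinct depth-(h−j) subtrees of the succinct (n,h)-universal tree forms a chain under ⊑. Concretely, if r₁, r₂ are vertices at depth h−j with bit-lengths |r₁| ≥ |r₂|, then the subtree rooted at r₁ embeds into the subtree rooted at r₂. -/
/-- Binary strings. -/
abbrev BStr := List Bool

/-- The linear order on finite binary strings used for succinct universal trees: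
`0s < ε < 1s'` and `bs < bs' ↔ s < s'`. -/
def slt : BStr → BStr → Prop
  | [], [] => False
  | false :: _, [] => True
  | true :: _, [] => False
  | [], true :: _ => True
  | [], false :: _ => False
  | false :: _, true :: _ => True
  | true :: _, false :: _ => False
  | false :: s, false :: t => slt s t
  | true :: s, true :: t => slt s t

/-- Total number of bits in a tuple of binary strings. -/
def bits (v : List BStr) : ℕ := (v.map List.length).sum

/-- Vertices of the succinct tree `T_{b,j}`: tuples of at most `j` binary strings
with at most `b` bits in total.  (Its leaves are the `j`-tuples with `≤ b` bits.) -/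
def SVerts (b j : ℕ) : Set (List BStr) := {v | v.length ≤ j ∧ bits v ≤ b}

/-- Edges of `T_{b,j}` (child relation). -/
def SEdge (b j : ℕ) (u v : List BStr) : Prop :=
  u ∈ SVerts b j ∧ v ∈ SVerts b j ∧ ∃ a : BStr, v = u ++ [a]

/-- Leaves of `T_{b,j}`: vertices with no child. -/
def SLeaf (b j : ℕ) (v : List BStr) : Prop :=
  v ∈ SVerts b j ∧ ∀ a : BStr, v ++ [a] ∉ SVerts b j

/-- `T_{b,j} ⊑ T_{b',j'}`: an injective, order-preserving homomorphism mapping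
edges to edges and leaves to leaves. -/
def SEmbeds (b j b' j' : ℕ) : Prop :=
  ∃ f : List BStr → List BStr,
    (∀ v ∈ SVerts b j, f v ∈ SVerts b' j') ∧
    Set.InjOn f (SVerts b j) ∧
    (∀ u v, SEdge b j u v → SEdge b' j' (f u) (f v)) ∧
    (∀ u ∈ SVerts b j, ∀ v ∈ SVerts b j, List.Lex slt u v → List.Lex slt (f u) (f v)) ∧
    (∀ v, SLeaf b j v → SLeaf b' j' (f v))

/-!
For a fixed number `j` of strings, `T_{b,j}` only grows with the bit budget `b`, and its leaves
are exactly the `j`-tuples whatever `b` is (the empty string can always be appended to a shorter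
tuple). Hence for `b ≤ b'` the identity embeds `T_{b,j}` into `T_{b',j}`. The subtree at a vertex
`r` of the universal tree is `T_{⌊log n⌋ - |r|, j}`, so more bits at the root means a smaller tree.
-/

theorem SVerts_mono {b b' : ℕ} (hb : b ≤ b') (j : ℕ) : SVerts b j ⊆ SVerts b' j :=
  fun _ ⟨hlen, hbits⟩ => ⟨hlen, hbits.trans hb⟩

theorem SEdge.mono {b b' j : ℕ} {u v : List BStr} (hb : b ≤ b') (h : SEdge b j u v) :
    SEdge b' j u v :=
  ⟨SVerts_mono hb j h.1, SVerts_mono hb j h.2.1, h.2.2⟩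

theorem sLeaf_iff {b j : ℕ} {v : List BStr} : SLeaf b j v ↔ v ∈ SVerts b j ∧ v.length = j := by
  have bits_append_nil : bits (v ++ [[]]) = bits v := by simp [bits]
  constructor
  · rintro ⟨hv, hleaf⟩
    refine ⟨hv, le_antisymm hv.1 (not_lt.mp fun hlt => hleaf [] ⟨?_, bits_append_nil ▸ hv.2⟩)⟩
    simpa using hlt
  · rintro ⟨hv, hlen⟩
    exact ⟨hv, fun a ha => by simpa [hlen] using ha.1⟩

theorem SLeaf.mono {b b' j : ℕ} {v : List BStr} (hb : b ≤ b') (h : SLeaf b j v) :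
    SLeaf b' j v := by
  rw [sLeaf_iff] at h ⊢
  exact ⟨SVerts_mono hb j h.1, h.2⟩

theorem SEmbeds.of_le {b b' : ℕ} (hb : b ≤ b') (j : ℕ) : SEmbeds b j b' j :=
  ⟨id, fun _ hv => SVerts_mono hb j hv, Function.injective_id.injOn,
    fun _ _ h => h.mono hb, fun _ _ _ _ h => h, fun _ h => h.mono hb⟩

theorem SEmbeds.total (b₁ b₂ j : ℕ) : SEmbeds b₁ j b₂ j ∨ SEmbeds b₂ j b₁ j :=
  (le_total b₁ b₂).imp (SEmbeds.of_le · j) (SEmbeds.of_le · j)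

theorem stmt_9_general (n j : ℕ) (r₁ r₂ : List BStr)
    (hbits : bits r₂ ≤ bits r₁) :
    SEmbeds (Nat.log 2 n - bits r₁) j (Nat.log 2 n - bits r₂) j ∧
    (∀ b₁ b₂ : ℕ, SEmbeds b₁ j b₂ j ∨ SEmbeds b₂ j b₁ j) :=
  ⟨SEmbeds.of_le (Nat.sub_le_sub_left hbits _) j, fun b₁ b₂ => SEmbeds.total b₁ b₂ j⟩

/-- In the succinct `(n,h)`-universal tree (whose vertices are tuples of
binary strings with at most `⌊log n⌋` bits in total), any two subtrees rooted at the same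
depth `h - j` are comparable under embeddability.  Concretely, if `r₁, r₂` are vertices at
depth `h - j` with `|r₁| ≥ |r₂|` bits, then the subtree rooted at `r₁` (a copy of
`T_{⌊log n⌋ - |r₁|, j}`) embeds into the subtree rooted at `r₂` (a copy of
`T_{⌊log n⌋ - |r₂|, j}`); hence the set of distinct depth-`(h-j)` subtrees is a chain. -/
theorem stmt_9 (n h j : ℕ) (hj : j ≤ h) (r₁ r₂ : List BStr)
    (h₁ : r₁ ∈ SVerts (Nat.log 2 n) h) (h₂ : r₂ ∈ SVerts (Nat.log 2 n) h)
    (hd₁ : r₁.length = h - j) (hd₂ : r₂.length = h - j)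
    (hbits : bits r₂ ≤ bits r₁) :
    SEmbeds (Nat.log 2 n - bits r₁) j (Nat.log 2 n - bits r₂) j ∧
    (∀ b₁ b₂ : ℕ, SEmbeds b₁ j b₂ j ∨ SEmbeds b₂ j b₁ j) :=
  stmt_9_general n j r₁ r₂ hbits
end

section
/- In the succinct g-Strahler (n,h)-universal tree, for every height j and every 0 ≤ k ≤ g, the set of depth-(h−j) subtrees that are succinct k-Strahler universal trees forms a chain under embeddability: if r₁, r₂ are vertices at depth h−j each having exactly g−k nonempty bit strings and |r₁| ≥ |r₂|, then the subtree rooted at r₁ embeds into the subtree rooted at r₂. Consequently the distinct depth-(h−j) subtrees are covered by at most g+1 chains. -/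
/-- Number of nonempty strings in a tuple. -/
def neCount (v : List BStr) : ℕ := (v.filter (fun s => !s.isEmpty)).length

/-- Number of non-leading bits in a tuple (each nonempty string contributes all its bits
except the leading one). -/
def nlBits (v : List BStr) : ℕ := (v.map (fun s => s.length - 1)).sum

/-- Vertices of the succinct `k`-Strahler universal tree of height `j` with non-leading-bit
budget `b`: tuples of at most `j` binary strings with at most `k` nonempty strings and at
most `b` non-leading bits, completable to a leaf with exactly `k` nonempty strings, and
satisfying the two structural conditions of Daviaud–Jurdziński–Thejaswini:
(a) if a proper prefix has fewer than `k` nonempty strings and already uses all `b`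
non-leading bits, the next string is `0`; (b) any prefix consisting solely of nonempty
strings has all its strings starting with `0`. -/
def StVerts (k b j : ℕ) : Set (List BStr) :=
  {v | v.length ≤ j ∧ neCount v ≤ k ∧ nlBits v ≤ b ∧ k - neCount v ≤ j - v.length ∧
    (∀ u a, u ++ [a] <+: v → neCount u < k → nlBits u = b → a = [false]) ∧
    (∀ u, u <+: v → (∀ s ∈ u, s ≠ ([] : BStr)) → ∀ s ∈ u, s.head? = some false)}

/-- Edges (child relation) of the succinct `k`-Strahler tree. -/
def StEdge (k b j : ℕ) (u v : List BStr) : Prop :=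
  u ∈ StVerts k b j ∧ v ∈ StVerts k b j ∧ ∃ a : BStr, v = u ++ [a]

/-- Leaves of the succinct `k`-Strahler tree: vertices with no child. -/
def StLeaf (k b j : ℕ) (v : List BStr) : Prop :=
  v ∈ StVerts k b j ∧ ∀ a : BStr, v ++ [a] ∉ StVerts k b j

/-- Embeddability of succinct Strahler trees: an injective, order-preserving
homomorphism mapping edges to edges and leaves to leaves. -/
def StEmbeds (k b j k' b' j' : ℕ) : Prop :=
  ∃ f : List BStr → List BStr,
    (∀ v ∈ StVerts k b j, f v ∈ StVerts k' b' j') ∧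
    Set.InjOn f (StVerts k b j) ∧
    (∀ u v, StEdge k b j u v → StEdge k' b' j' (f u) (f v)) ∧
    (∀ u ∈ StVerts k b j, ∀ v ∈ StVerts k b j,
      List.Lex slt u v → List.Lex slt (f u) (f v)) ∧
    (∀ v, StLeaf k b j v → StLeaf k' b' j' (f v))

/-!
The subtree rooted at a vertex `r` is the succinct Strahler tree whose non-leading-bit budget
is `⌊log n⌋ - nlBits r`. Roots with the same number of nonempty strings differ in size only
through their non-leading bits, so the larger root leaves the smaller budget. Lowering the
budget only removes vertices, and in both trees the leaves are exactly the vertices of length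
`j`, so the identity map embeds the tree with the smaller budget into the other one.
-/

@[simp]
lemma neCount_append (u t : List BStr) : neCount (u ++ t) = neCount u + neCount t := by
  simp [neCount, List.filter_append]

@[simp]
lemma nlBits_append (u t : List BStr) : nlBits (u ++ t) = nlBits u + nlBits t := by
  simp [nlBits]

lemma bits_eq_nlBits_add_neCount (v : List BStr) : bits v = nlBits v + neCount v := by
  induction v with
  | nil => rfl
  | cons s v ih =>
    cases s <;> simp [bits, nlBits, neCount] at * <;> omega

lemma nlBits_le_of_prefix {u v : List BStr} (h : u <+: v) : nlBits u ≤ nlBits v := by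
  obtain ⟨t, rfl⟩ := h
  simp

lemma StVerts_mono {k b₁ b₂ j : ℕ} (hb : b₁ ≤ b₂) :
    StVerts k b₁ j ⊆ StVerts k b₂ j := by
  rintro v ⟨hlen, hne, hnl, hfill, hzero, hhead⟩
  refine ⟨hlen, hne, hnl.trans hb, hfill,
    fun u a hpre hneu hnlu => hzero u a hpre hneu ?_, hhead⟩
  have : nlBits u ≤ nlBits v :=
    nlBits_le_of_prefix ((List.prefix_append u [a]).trans hpre)
  omega

lemma concat_mem_StVerts {k b j : ℕ} {v : List BStr} {a : BStr} (hv : v ∈ StVerts k b j)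
    (hlen : v.length < j) (hne : neCount (v ++ [a]) ≤ k) (hnl : nlBits (v ++ [a]) ≤ b)
    (hfill : k - neCount (v ++ [a]) ≤ j - (v.length + 1))
    (hzero : neCount v < k → nlBits v = b → a = [false])
    (hhead : a ≠ [] → a.head? = some false) :
    v ++ [a] ∈ StVerts k b j := by
  obtain ⟨-, -, -, -, hzero_v, hhead_v⟩ := hv
  refine ⟨by simpa using hlen, hne, hnl, by simpa using hfill, ?_, ?_⟩
  · intro u c hpre hneu hnlu
    rcases List.prefix_concat_iff.mp hpre with heq | hpre
    · obtain ⟨rfl, hc⟩ := List.append_inj' heq rfl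
      obtain rfl : c = a := by simpa using hc
      exact hzero hneu hnlu
    · exact hzero_v u c hpre hneu hnlu
  · intro u hpre hall s hs
    rcases List.prefix_concat_iff.mp hpre with rfl | hpre
    · rcases List.mem_append.mp hs with hs | hs
      · exact hhead_v v List.prefix_rfl (fun t ht => hall t (List.mem_append_left _ ht)) s hs
      · rw [List.mem_singleton.mp hs]
        exact hhead (hall a (by simp))
    · exact hhead_v u hpre hall s hs

lemma StLeaf.length_eq {k b j : ℕ} {v : List BStr} (hl : StLeaf k b j v) : v.length = j := by
  obtain ⟨hv, hnochild⟩ := hl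
  obtain ⟨hlen, hne, hnl, hfill, -, -⟩ := id hv
  by_contra hlen_ne
  have hlt : v.length < j := lt_of_le_of_ne hlen hlen_ne
  -- a short vertex has a child: `0` while nonempty strings are still missing, `ε` otherwise
  by_cases hk : neCount v < k
  · refine hnochild [false]
      (concat_mem_StVerts hv hlt ?_ ?_ ?_ (fun _ _ => rfl) fun _ => rfl) <;>
      simp [neCount, nlBits] at * <;> omega
  · refine hnochild []
      (concat_mem_StVerts hv hlt ?_ ?_ ?_ (fun h => absurd h hk) fun h => (h rfl).elim) <;>
      simp [neCount, nlBits] at * <;> omega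

lemma StEmbeds_of_le {k j b₁ b₂ : ℕ} (hb : b₁ ≤ b₂) : StEmbeds k b₁ j k b₂ j := by
  refine ⟨id, fun v hv => StVerts_mono hb hv, Set.injOn_id _, ?_, fun _ _ _ _ h => h, ?_⟩
  · rintro u v ⟨hu, hv, a, rfl⟩
    exact ⟨StVerts_mono hb hu, StVerts_mono hb hv, a, rfl⟩
  · intro v hl
    refine ⟨StVerts_mono hb hl.1, fun a hva => ?_⟩
    have := hva.1
    simp [hl.length_eq] at this

theorem stmt_11_general (n j g k : ℕ) (r₁ r₂ : List BStr)
    (hne₁ : neCount r₁ = g - k) (hne₂ : neCount r₂ = g - k)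
    (hsz : bits r₂ ≤ bits r₁) :
    StEmbeds k (Nat.log 2 n - nlBits r₁) j k (Nat.log 2 n - nlBits r₂) j ∧
    (∀ b₁ b₂ : ℕ, StEmbeds k b₁ j k b₂ j ∨ StEmbeds k b₂ j k b₁ j) := by
  have hnl : nlBits r₂ ≤ nlBits r₁ := by
    rw [bits_eq_nlBits_add_neCount, bits_eq_nlBits_add_neCount, hne₁, hne₂] at hsz
    omega
  exact ⟨StEmbeds_of_le (Nat.sub_le_sub_left hnl _),
    fun b₁ b₂ => (le_total b₁ b₂).imp StEmbeds_of_le StEmbeds_of_le⟩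

/-- In the succinct `g`-Strahler `(n,h)`-universal tree, for every height
`j` and every `k ≤ g`, the depth-`(h-j)` subtrees that are succinct `k`-Strahler universal
trees form a chain under embeddability: if `r₁, r₂` are vertices at depth `h - j`, each
with exactly `g - k` nonempty strings, and `|r₁| ≥ |r₂|`, then the subtree rooted at `r₁`
(a succinct `k`-Strahler tree with non-leading-bit budget `⌊log n⌋ - nlBits r₁`) embeds
into the subtree rooted at `r₂`.  Consequently, for each `k` the corresponding subtrees
are pairwise comparable, so the distinct depth-`(h-j)` subtrees are covered by at most
`g + 1` chains (one for each `0 ≤ k ≤ g`). -/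
theorem stmt_11 (n h j g k : ℕ) (hk : k ≤ g) (hj : j ≤ h) (r₁ r₂ : List BStr)
    (hr₁ : r₁ ∈ StVerts g (Nat.log 2 n) h) (hr₂ : r₂ ∈ StVerts g (Nat.log 2 n) h)
    (hd₁ : r₁.length = h - j) (hd₂ : r₂.length = h - j)
    (hne₁ : neCount r₁ = g - k) (hne₂ : neCount r₂ = g - k)
    (hsz : bits r₂ ≤ bits r₁) :
    StEmbeds k (Nat.log 2 n - nlBits r₁) j k (Nat.log 2 n - nlBits r₂) j ∧
    (∀ b₁ b₂ : ℕ, StEmbeds k b₁ j k b₂ j ∨ StEmbeds k b₂ j k b₁ j) :=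
  stmt_11_general n j g k r₁ r₂ hne₁ hne₂ hsz
end
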